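/- Let L be a complete modular lattice and 𝔪 a submonoid with zero of End_lin(L) that is closed under complements, and suppose L is 𝔪-endoregular. The following are equivalent: (a) any two idempotent elements of 𝔪 commute; (b) C(L) is a Boolean lattice, that is: C(L) is closed under the meet and join of L, and the bounded lattice C(L) is distributive (and every element of C(L) has a complement in C(L)). -/

import Mathlib

section Preamble

variable {α β : Type*}

/-- A linear morphism between complete lattices: there is a kernel element `k` such that
`φ x = φ (x ⊔ k)` for all `x`, and `φ` restricts to an isomorphism of (complete) lattices
from the interval `[k, ⊤]` onto `[⊥, φ ⊤]`. -/
def IsLinMor [CompleteLattice α] [CompleteLattice β] (φ : α → β) : Prop :=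
  ∃ k : α, (∀ x, φ x = φ (x ⊔ k)) ∧
    ∃ e : Set.Icc k (⊤ : α) ≃o Set.Icc (⊥ : β) (φ ⊤),
      ∀ x : Set.Icc k (⊤ : α), (e x : β) = φ (x : α)

/-- The kernel of a linear morphism: the largest element sent to `⊥`. -/
noncomputable def linKer [CompleteLattice α] [CompleteLattice β] (φ : α → β) : α :=
  sSup {a | φ a = ⊥}

/-- A submonoid with zero of the monoid of linear endomorphisms of `α`. -/
structure IsLinSubmonoid [CompleteLattice α] (M : Set (α → α)) : Prop where
  lin_mem : ∀ φ ∈ M, IsLinMor φ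
  id_mem : (id : α → α) ∈ M
  zero_mem : (fun _ : α => (⊥ : α)) ∈ M
  comp_mem : ∀ φ ∈ M, ∀ ψ ∈ M, φ ∘ ψ ∈ M

/-- The projection onto `x` along a complement `x'`. -/
def proj [CompleteLattice α] (x x' : α) : α → α := fun a => (a ⊔ x') ⊓ x

/-- `M` is closed under complements: whenever `φ ∈ M` restricts to a linear isomorphism
`[⊥, x] → [⊥, y]` with `x, y` complemented, the composite `ι_x ∘ (φ|_x)⁻¹ ∘ π_y` is in `M`. -/
def ClosedUnderComplements [CompleteLattice α] (M : Set (α → α)) : Prop :=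
  ∀ φ ∈ M, ∀ x x' y y' : α, IsCompl x x' → IsCompl y y' →
    ∀ e : Set.Icc (⊥ : α) x ≃o Set.Icc (⊥ : α) y,
      (∀ a : Set.Icc (⊥ : α) x, ((e a : Set.Icc (⊥ : α) y) : α) = φ (a : α)) →
      (fun a : α =>
        ((e.symm ⟨(a ⊔ y') ⊓ y, bot_le, inf_le_right⟩ : Set.Icc (⊥ : α) x) : α)) ∈ M

/-- `L` is `M`-endoregular: `M` is a regular monoid. -/
def MEndoregular [CompleteLattice α] (M : Set (α → α)) : Prop :=
  ∀ φ ∈ M, ∃ ψ ∈ M, φ ∘ ψ ∘ φ = φ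

/-- `L` is `M`-Rickart: kernels of members of `M` have complements. -/
def MRickart [CompleteLattice α] (M : Set (α → α)) : Prop :=
  ∀ φ ∈ M, ∃ y, IsCompl (linKer φ) y

/-- `L` is dual-`M`-Rickart: images of members of `M` have complements. -/
def MDualRickart [CompleteLattice α] (M : Set (α → α)) : Prop :=
  ∀ φ ∈ M, ∃ y, IsCompl (φ ⊤) y

/-- The `M`-C2 condition. -/
def MC2 [CompleteLattice α] (M : Set (α → α)) : Prop :=
  ∀ a x x' : α, IsCompl x x' →
    ∀ e : Set.Icc (⊥ : α) x ≃o Set.Icc (⊥ : α) a,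
      ((fun b : α =>
          ((e ⟨(b ⊔ x') ⊓ x, bot_le, inf_le_right⟩ : Set.Icc (⊥ : α) a) : α)) ∈ M) →
      ∃ a', IsCompl a a'

/-- The `M`-D2 condition. -/
def MD2 [CompleteLattice α] (M : Set (α → α)) : Prop :=
  ∀ a x : α, (∃ x', IsCompl x x') →
    ∀ e : Set.Icc a (⊤ : α) ≃o Set.Icc (⊥ : α) x,
      ((fun b : α => ((e ⟨a ⊔ b, le_sup_left, le_top⟩ : Set.Icc (⊥ : α) x) : α)) ∈ M) →
      ∃ a', IsCompl a a'

/-- `L` is `M`-abelian: every idempotent of `M` is central in `M`. -/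
def MAbelian [CompleteLattice α] (M : Set (α → α)) : Prop :=
  ∀ ε ∈ M, ε ∘ ε = ε → ∀ φ ∈ M, ε ∘ φ = φ ∘ ε

/-- `a` is `M`-`L`-generated: it is a join of images of linear morphisms `L → [⊥, a]`
whose composites with the inclusion `ι_a` lie in `M`. -/
def MGenerated [CompleteLattice α] (M : Set (α → α)) (a : α) : Prop :=
  ∃ S : Set (α → α), S ⊆ M ∧ (∀ f ∈ S, ∀ x, f x ≤ a) ∧ (⨆ f ∈ S, f ⊤) = a

/-- A complete lattice is compact if every join representation of `⊤` has a finite subjoin. -/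
def CompactLat (α : Type*) [CompleteLattice α] : Prop :=
  ∀ s : Set α, sSup s = ⊤ → ∃ t : Finset α, ↑t ⊆ s ∧ sSup (↑t : Set α) = ⊤

/-- An element `c` is compact if the interval `[⊥, c]` is a compact lattice. -/
def CompactElt [CompleteLattice α] (c : α) : Prop :=
  ∀ s : Set α, (∀ a ∈ s, a ≤ c) → sSup s = c →
    ∃ t : Finset α, ↑t ⊆ s ∧ sSup (↑t : Set α) = c

/-- `x` is essential in `L`. -/
def Essential [CompleteLattice α] (x : α) : Prop := ∀ y, x ⊓ y = ⊥ → y = ⊥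

/-- `x` is essential in the interval `[⊥, c]`. -/
def EssentialIn [CompleteLattice α] (x c : α) : Prop :=
  x ≤ c ∧ ∀ y ≤ c, x ⊓ y = ⊥ → y = ⊥

/-- `x` is superfluous in `L`. -/
def Superfluous [CompleteLattice α] (x : α) : Prop := ∀ y, x ⊔ y = ⊤ → y = ⊤

/-- `x` is superfluous in the interval `[⊥, c]`. -/
def SuperfluousIn [CompleteLattice α] (x c : α) : Prop :=
  x ≤ c ∧ ∀ y ≤ c, x ⊔ y = c → y = c

/-- `M` contains all the projections. -/
def ContainsProjections [CompleteLattice α] (M : Set (α → α)) : Prop :=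
  ∀ x x' : α, IsCompl x x' → proj x x' ∈ M

/-- `L` is `M`-K-extending. -/
def MKExtending [CompleteLattice α] (M : Set (α → α)) : Prop :=
  ∀ φ ∈ M, ∃ c : α, (∃ c', IsCompl c c') ∧ EssentialIn (linKer φ) c

/-- `L` is `M`-K-nonsingular. -/
def MKNonsingular [CompleteLattice α] (M : Set (α → α)) : Prop :=
  ∀ φ ∈ M, Essential (linKer φ) → φ = fun _ => (⊥ : α)

/-- `L` is `M`-T-lifting. -/
def MTLifting [CompleteLattice α] (M : Set (α → α)) : Prop :=
  ∀ φ ∈ M, ∃ c c' : α, IsCompl c c' ∧ c ≤ φ ⊤ ∧ SuperfluousIn (φ ⊤ ⊓ c') c'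

end Preamble

/-!
Both conditions are equivalent to the following one: for complemented `x` (with complement `x'`)
and complemented `y`, the projection `π_x y = (y ⊔ x') ⊓ x` equals `x ⊓ y`.

If projections commute, `π_x y = π_x π_y ⊤ = π_y π_x ⊤ ≤ y`, which gives the condition. The
condition makes `x ⊓ y` complemented by `x' ⊔ y'`, and since `π_x` preserves joins in a modular
lattice, `x ⊓ (y ⊔ z) = π_x (y ⊔ z) = π_x y ⊔ π_x z`. Conversely, distributivity gives
`(y ⊔ x') ⊓ x = x ⊓ y` at once.

For the commutation of idempotents: a linear idempotent `ε` is the projection onto `ε ⊤` along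
its kernel. Under the condition, `εδ` and `δε` are linear idempotents with the same image
`ε ⊤ ⊓ δ ⊤`, and complements are unique in `C(L)`, so their kernels agree as well.
-/

namespace IsLinMor

variable {α β : Type*} [CompleteLattice α] [CompleteLattice β] {φ : α → β}

private theorem map_eq_bot_iff_of_spec {k : α} (hk : ∀ x, φ x = φ (x ⊔ k))
    (e : Set.Icc k ⊤ ≃o Set.Icc (⊥ : β) (φ ⊤)) (he : ∀ x : Set.Icc k ⊤, (e x : β) = φ x)
    (a : α) : φ a = ⊥ ↔ a ≤ k := by
  have hφk : φ k = ⊥ := by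
    rw [← he ⟨k, le_rfl, le_top⟩, ← le_bot_iff]
    exact Subtype.coe_le_coe.2
      (e.le_symm_apply.1 (e.symm ⟨⊥, le_rfl, bot_le⟩).2.1 : e ⟨k, le_rfl, le_top⟩ ≤ _)
  refine ⟨fun ha => ?_, fun ha => by rw [hk, sup_eq_right.2 ha, hφk]⟩
  have h : e ⟨a ⊔ k, le_sup_right, le_top⟩ = e ⟨k, le_rfl, le_top⟩ :=
    Subtype.ext (by rw [he, he, ← hk, ha, hφk])
  exact sup_eq_right.1 (congrArg Subtype.val (e.injective h))

/-- The kernel witnessing linearity is necessarily `linKer φ`. -/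
theorem linKer_spec (h : IsLinMor φ) :
    (∀ x, φ x = φ (x ⊔ linKer φ)) ∧
      ∃ e : Set.Icc (linKer φ) ⊤ ≃o Set.Icc (⊥ : β) (φ ⊤),
        ∀ x : Set.Icc (linKer φ) ⊤, (e x : β) = φ x := by
  obtain ⟨k, hk, e, he⟩ := h
  have hker : linKer φ = k := by
    have : {a | φ a = ⊥} = Set.Iic k := Set.ext (map_eq_bot_iff_of_spec hk e he)
    rw [linKer, this, csSup_Iic]
  subst hker
  exact ⟨hk, e, he⟩

theorem map_eq_bot_iff (h : IsLinMor φ) (a : α) : φ a = ⊥ ↔ a ≤ linKer φ :=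
  let ⟨hk, e, he⟩ := h.linKer_spec
  map_eq_bot_iff_of_spec hk e he a

theorem map_sup_linKer (h : IsLinMor φ) (a : α) : φ (a ⊔ linKer φ) = φ a :=
  (h.linKer_spec.1 a).symm

theorem eq_of_map_eq (h : IsLinMor φ) {a b : α} (ha : linKer φ ≤ a) (hb : linKer φ ≤ b)
    (hab : φ a = φ b) : a = b := by
  obtain ⟨-, e, he⟩ := h.linKer_spec
  have : e ⟨a, ha, le_top⟩ = e ⟨b, hb, le_top⟩ := Subtype.ext (by rw [he, he, hab])
  exact congrArg Subtype.val (e.injective this)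

theorem exists_map_eq (h : IsLinMor φ) {c : β} (hc : c ≤ φ ⊤) : ∃ a, φ a = c := by
  obtain ⟨-, e, he⟩ := h.linKer_spec
  exact ⟨e.symm ⟨c, bot_le, hc⟩, by rw [← he, e.apply_symm_apply]⟩

end IsLinMor

section Projection

variable {α : Type*} [CompleteLattice α] {x x' : α}

theorem proj_apply (x x' a : α) : proj x x' a = (a ⊔ x') ⊓ x := rfl

theorem proj_le (x x' a : α) : proj x x' a ≤ x := inf_le_right

theorem proj_mono (x x' : α) : Monotone (proj x x') :=
  fun _ _ h => inf_le_inf_right _ (sup_le_sup_right h _)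

theorem proj_top (x x' : α) : proj x x' ⊤ = x := by
  rw [proj_apply, top_sup_eq, top_inf_eq]

theorem proj_mem {M : Set (α → α)} (hid : id ∈ M) (hcc : ClosedUnderComplements M)
    (hx : IsCompl x x') : proj x x' ∈ M :=
  hcc id hid x x' x x' hx hx (OrderIso.refl _) fun _ => rfl

variable [IsModularLattice α]

theorem proj_of_le (hx : IsCompl x x') {c : α} (hc : c ≤ x) : proj x x' c = c := by
  rw [proj_apply, sup_inf_assoc_of_le x' hc, hx.symm.inf_eq_bot, sup_bot_eq]

theorem proj_idem (hx : IsCompl x x') : proj x x' ∘ proj x x' = proj x x' :=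
  funext fun a => proj_of_le hx (proj_le x x' a)

theorem proj_sup_compl (hx : IsCompl x x') (a : α) : proj x x' a ⊔ x' = a ⊔ x' := by
  rw [proj_apply, inf_sup_assoc_of_le x le_sup_right, hx.sup_eq_top, inf_top_eq]

theorem proj_sup (hx : IsCompl x x') (a b : α) :
    proj x x' (a ⊔ b) = proj x x' a ⊔ proj x x' b := by
  have h : a ⊔ b ⊔ x' = proj x x' a ⊔ proj x x' b ⊔ x' := by
    rw [sup_sup_distrib_right, ← proj_sup_compl hx a, ← proj_sup_compl hx b,
      ← sup_sup_distrib_right]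
  rw [proj_apply, h, ← proj_apply, proj_of_le hx (sup_le (proj_le _ _ _) (proj_le _ _ _))]

theorem proj_eq_inf_of_comm {y y' : α} (hx : IsCompl x x')
    (hcomm : proj x x' ∘ proj y y' = proj y y' ∘ proj x x') : proj x x' y = x ⊓ y := by
  refine le_antisymm (le_inf (proj_le _ _ _) ?_) ?_
  · calc proj x x' y = (proj x x' ∘ proj y y') ⊤ := by rw [Function.comp_apply, proj_top]
      _ = proj y y' (proj x x' ⊤) := congrFun hcomm ⊤
      _ ≤ y := proj_le _ _ _
  · calc x ⊓ y = proj x x' (x ⊓ y) := (proj_of_le hx inf_le_left).symm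
      _ ≤ proj x x' y := proj_mono _ _ inf_le_right

theorem IsLinMor.eq_proj_of_idem {ε : α → α} (h : IsLinMor ε) (hε : ε ∘ ε = ε) :
    IsCompl (ε ⊤) (linKer ε) ∧ ε = proj (ε ⊤) (linKer ε) := by
  have hfix : ∀ c ≤ ε ⊤, ε c = c := fun c hc => by
    obtain ⟨a, rfl⟩ := h.exists_map_eq hc
    exact congrFun hε a
  have hsup : ε ⊤ ⊔ linKer ε = ⊤ :=
    h.eq_of_map_eq le_sup_right le_top (by rw [h.map_sup_linKer, hfix _ le_rfl])
  have hinf : ε ⊤ ⊓ linKer ε = ⊥ := by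
    rw [← hfix _ inf_le_left, h.map_eq_bot_iff]
    exact inf_le_right
  have hc : IsCompl (ε ⊤) (linKer ε) := .of_eq hinf hsup
  refine ⟨hc, funext fun a => ?_⟩
  rw [← h.map_sup_linKer, ← proj_sup_compl hc, h.map_sup_linKer, hfix _ (proj_le _ _ _)]

end Projection

def ProjEqInf (α : Type*) [CompleteLattice α] : Prop :=
  ∀ ⦃x x' y y' : α⦄, IsCompl x x' → IsCompl y y' → proj x x' y = x ⊓ y

namespace ProjEqInf

variable {α : Type*} [CompleteLattice α] {x x' y y' : α}

theorem of_distrib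
    (hdist : ∀ x : α, (∃ x', IsCompl x x') → ∀ y : α, (∃ y', IsCompl y y') →
      ∀ z : α, (∃ z', IsCompl z z') → x ⊓ (y ⊔ z) = (x ⊓ y) ⊔ (x ⊓ z)) :
    ProjEqInf α := fun x x' y y' hx hy => by
  rw [proj_apply, inf_comm, hdist x ⟨x', hx⟩ y ⟨y', hy⟩ x' ⟨x, hx.symm⟩, hx.inf_eq_bot,
    sup_bot_eq]

theorem compl_unique (hP : ProjEqInf α) {c z₁ z₂ : α} (h₁ : IsCompl c z₁) (h₂ : IsCompl c z₂) :
    z₁ = z₂ := by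
  have key : ∀ {z₁ z₂ : α}, IsCompl c z₁ → IsCompl c z₂ → z₁ ≤ z₂ := fun {z₁ z₂} h₁ h₂ => by
    have h : proj z₁ c z₂ = z₁ := by rw [proj_apply, sup_comm, h₂.sup_eq_top, top_inf_eq]
    rw [← h, hP h₁.symm h₂.symm]
    exact inf_le_right
  exact le_antisymm (key h₁ h₂) (key h₂ h₁)

theorem proj_comp_proj_top (hP : ProjEqInf α) (hx : IsCompl x x') (hy : IsCompl y y') :
    (proj x x' ∘ proj y y') ⊤ = x ⊓ y := by
  rw [Function.comp_apply, proj_top, hP hx hy]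

variable [IsModularLattice α]

theorem of_idem_comm {M : Set (α → α)} (hid : id ∈ M) (hcc : ClosedUnderComplements M)
    (h : ∀ ε ∈ M, ε ∘ ε = ε → ∀ δ ∈ M, δ ∘ δ = δ → ε ∘ δ = δ ∘ ε) : ProjEqInf α :=
  fun _ _ _ _ hx hy => proj_eq_inf_of_comm hx <|
    h _ (proj_mem hid hcc hx) (proj_idem hx) _ (proj_mem hid hcc hy) (proj_idem hy)

theorem isCompl_inf_sup (hP : ProjEqInf α) (hx : IsCompl x x') (hy : IsCompl y y') :
    IsCompl (x ⊓ y) (x' ⊔ y') := by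
  refine .of_le (le_of_eq ?_) ?_
  · have hxy' : x ⊓ (x' ⊔ y') = x ⊓ y' := by
      rw [← hP hx hy.symm, proj_apply, sup_comm, inf_comm]
    calc x ⊓ y ⊓ (x' ⊔ y') = x ⊓ (x' ⊔ y') ⊓ y := by ac_rfl
      _ = ⊥ := by rw [hxy', inf_assoc, hy.symm.inf_eq_bot, inf_bot_eq]
  · calc ⊤ = y ⊔ y' := hy.sup_eq_top.symm
      _ ≤ y ⊔ x' ⊔ y' := sup_le (le_sup_left.trans le_sup_left) le_sup_right
      _ = x ⊓ y ⊔ (x' ⊔ y') := by rw [← hP hx hy, ← sup_assoc, proj_sup_compl hx]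

theorem inf_sup_left (hP : ProjEqInf α) (hx : IsCompl x x') (hy : IsCompl y y') {z z' : α}
    (hz : IsCompl z z') : x ⊓ (y ⊔ z) = x ⊓ y ⊔ x ⊓ z := by
  rw [← hP hx hy, ← hP hx hz, ← proj_sup hx, hP hx (hP.isCompl_inf_sup hy.symm hz.symm).symm]

theorem proj_comp_proj_idem (hP : ProjEqInf α) (hx : IsCompl x x') (hy : IsCompl y y') :
    (proj x x' ∘ proj y y') ∘ (proj x x' ∘ proj y y') = proj x x' ∘ proj y y' := by
  funext a
  have ha : (proj x x' ∘ proj y y') a ≤ x ⊓ y :=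
    hP.proj_comp_proj_top hx hy ▸ (proj_mono x x').comp (proj_mono y y') le_top
  simp only [Function.comp_apply] at ha ⊢
  rw [proj_of_le hy (ha.trans inf_le_right), proj_of_le hx (ha.trans inf_le_left)]

theorem proj_comm (hP : ProjEqInf α) (hx : IsCompl x x') (hy : IsCompl y y')
    (hxy : IsLinMor (proj x x' ∘ proj y y')) (hyx : IsLinMor (proj y y' ∘ proj x x')) :
    proj x x' ∘ proj y y' = proj y y' ∘ proj x x' := by
  obtain ⟨h₁, e₁⟩ := hxy.eq_proj_of_idem (hP.proj_comp_proj_idem hx hy)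
  obtain ⟨h₂, e₂⟩ := hyx.eq_proj_of_idem (hP.proj_comp_proj_idem hy hx)
  rw [hP.proj_comp_proj_top hx hy] at h₁ e₁
  rw [hP.proj_comp_proj_top hy hx, inf_comm] at h₂ e₂
  rw [e₁, e₂, hP.compl_unique h₁ h₂]

theorem comm_of_idem (hP : ProjEqInf α) {ε δ : α → α} (hε : IsLinMor ε) (hδ : IsLinMor δ)
    (hεδ : IsLinMor (ε ∘ δ)) (hδε : IsLinMor (δ ∘ ε)) (hεε : ε ∘ ε = ε) (hδδ : δ ∘ δ = δ) :
    ε ∘ δ = δ ∘ ε := by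
  obtain ⟨hεc, hεp⟩ := hε.eq_proj_of_idem hεε
  obtain ⟨hδc, hδp⟩ := hδ.eq_proj_of_idem hδδ
  rw [hεp, hδp] at hεδ hδε ⊢
  exact hP.proj_comm hεc hδc hεδ hδε

end ProjEqInf

theorem stmt_11_general {α : Type*} [CompleteLattice α] [IsModularLattice α]
    (M : Set (α → α)) (hM : IsLinSubmonoid M) (hcc : ClosedUnderComplements M) :
    (∀ ε ∈ M, ε ∘ ε = ε → ∀ δ ∈ M, δ ∘ δ = δ → ε ∘ δ = δ ∘ ε) ↔
      ((∀ x : α, (∃ x', IsCompl x x') → ∀ y : α, (∃ y', IsCompl y y') →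
          (∃ z, IsCompl (x ⊓ y) z) ∧ (∃ z, IsCompl (x ⊔ y) z)) ∧
       (∀ x : α, (∃ x', IsCompl x x') → ∀ y : α, (∃ y', IsCompl y y') →
          ∀ z : α, (∃ z', IsCompl z z') → x ⊓ (y ⊔ z) = (x ⊓ y) ⊔ (x ⊓ z)) ∧
       (∀ x : α, (∃ x', IsCompl x x') → ∃ y, (∃ y', IsCompl y y') ∧ IsCompl x y)) := by
  refine ⟨fun h => ?_, fun ⟨_, hdist, _⟩ => ?_⟩
  · have hP := ProjEqInf.of_idem_comm hM.id_mem hcc h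
    refine ⟨fun x ⟨x', hx⟩ y ⟨y', hy⟩ => ?_, fun x ⟨x', hx⟩ y ⟨y', hy⟩ z ⟨z', hz⟩ => ?_,
      fun x ⟨x', hx⟩ => ⟨x', ⟨x, hx.symm⟩, hx⟩⟩
    · exact ⟨⟨_, hP.isCompl_inf_sup hx hy⟩, ⟨_, (hP.isCompl_inf_sup hx.symm hy.symm).symm⟩⟩
    · exact hP.inf_sup_left hx hy hz
  · intro ε hε hεε δ hδ hδδ
    have hlin := hM.lin_mem
    exact (ProjEqInf.of_distrib hdist).comm_of_idem (hlin ε hε) (hlin δ hδ)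
      (hlin _ (hM.comp_mem ε hε δ hδ)) (hlin _ (hM.comp_mem δ hδ ε hε)) hεε hδδ

/-- If `L` is `M`-endoregular, then any two idempotents of `M` commute iff
the set `C(L)` of complemented elements is a Boolean lattice: closed under meet and join,
distributive, and every element of `C(L)` has a complement lying in `C(L)`. -/
theorem stmt_11 {α : Type*} [CompleteLattice α] [IsModularLattice α]
    (M : Set (α → α)) (hM : IsLinSubmonoid M) (hcc : ClosedUnderComplements M)
    (hreg : MEndoregular M) :
    (∀ ε ∈ M, ε ∘ ε = ε → ∀ δ ∈ M, δ ∘ δ = δ → ε ∘ δ = δ ∘ ε) ↔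
      ((∀ x : α, (∃ x', IsCompl x x') → ∀ y : α, (∃ y', IsCompl y y') →
          (∃ z, IsCompl (x ⊓ y) z) ∧ (∃ z, IsCompl (x ⊔ y) z)) ∧
       (∀ x : α, (∃ x', IsCompl x x') → ∀ y : α, (∃ y', IsCompl y y') →
          ∀ z : α, (∃ z', IsCompl z z') → x ⊓ (y ⊔ z) = (x ⊓ y) ⊔ (x ⊓ z)) ∧
       (∀ x : α, (∃ x', IsCompl x x') → ∃ y, (∃ y', IsCompl y y') ∧ IsCompl x y)) :=
  stmt_11_general M hM hcc
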